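/- There exists an absolute constant γ > 0 such that for all n > 2, the hyperbolic cross Γ(γ b_n) := {(k_1,k_2) ∈ ℤ² : max(|k_1|,1)·max(|k_2|,1) ≤ γ b_n} contains no nonzero element of the Fibonacci lattice L(n) = {k ∈ ℤ² : k_1 + b_{n-1}k_2 ≡ 0 (mod b_n)}. -/
import Mathlib


def fibb : ℕ → ℕ
  | 0 => 1
  | 1 => 1
  | (n + 2) => fibb (n + 1) + fibb n

lemma fibb_pos (n : ℕ) : 0 < fibb n := by
  induction n using Nat.strong_induction_on with
  | _ n ih =>
    match n with
    | 0 => simp [fibb]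
    | 1 => simp [fibb]
    | (m + 2) =>
      have := ih (m + 1) (by omega)
      simp [fibb]; omega

lemma fibb_succ_le (n : ℕ) : fibb (n + 1) ≤ 2 * fibb n := by
  match n with
  | 0 => simp [fibb]
  | (m + 1) =>
    have h1 : fibb m ≤ fibb (m + 1) := by
      match m with
      | 0 => simp [fibb]
      | (j + 1) => have := fibb_pos j; simp only [fibb]; omega
    simp only [fibb]; omega

lemma fibb_le_succ (n : ℕ) : fibb n ≤ fibb (n + 1) := by
  match n with
  | 0 => simp [fibb]
  | (j + 1) => have := fibb_pos j; simp only [fibb]; omega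

lemma key (n : ℕ) : ∀ s m : ℤ, 1 ≤ m →
    s * (fibb (n+1) : ℤ) - m * (fibb n : ℤ) ≠ 0 →
    (fibb (n+1) : ℤ) ≤ 3 * m * |s * (fibb (n+1) : ℤ) - m * (fibb n : ℤ)| ∧
      (1 ≤ s → (fibb n : ℤ) ≤ 3 * s * |s * (fibb (n+1) : ℤ) - m * (fibb n : ℤ)|) := by
  induction n with
  | zero =>
    intro s m hm hr
    have h0 : (fibb 0 : ℤ) = 1 := by norm_num [fibb]
    have h1 : (fibb 1 : ℤ) = 1 := by norm_num [fibb]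
    rw [h0, h1] at *
    have habs : 1 ≤ |s * 1 - m * 1| := Int.one_le_abs hr
    constructor
    · nlinarith [abs_nonneg (s * 1 - m * 1)]
    · intro hs; nlinarith [abs_nonneg (s * 1 - m * 1)]
  | succ p ih =>
    intro s m hm hr
    have hB : (fibb (p + 2) : ℤ) = (fibb (p + 1) : ℤ) + (fibb p : ℤ) := by
      push_cast [fibb]; ring
    have hB0 : (1 : ℤ) ≤ (fibb p : ℤ) := by exact_mod_cast fibb_pos p
    have hB1 : (fibb (p + 1) : ℤ) ≤ 2 * (fibb p : ℤ) := by
      exact_mod_cast fibb_succ_le p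
    have hB1pos : (1 : ℤ) ≤ (fibb (p + 1) : ℤ) := by exact_mod_cast fibb_pos (p + 1)
    set B0 : ℤ := (fibb p : ℤ)
    set B1 : ℤ := (fibb (p + 1) : ℤ)
    set B2 : ℤ := (fibb (p + 2) : ℤ)
    set r : ℤ := s * B2 - m * B1 with hrdef
    rcases le_or_gt s 0 with hs0 | hs1
    · -- s ≤ 0 : |r| ≥ B1
      have hneg : B1 ≤ -r := by
        have : s * B2 ≤ 0 := mul_nonpos_of_nonpos_of_nonneg hs0 (by linarith [hB0, hB, hB1pos])
        nlinarith
      have habs : B1 ≤ |r| := le_trans hneg (neg_le_abs r)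
      have hmr : |r| ≤ m * |r| := le_mul_of_one_le_left (abs_nonneg r) hm
      have h01 : B0 ≤ B1 := by simp only [B0, B1]; exact_mod_cast fibb_le_succ p
      constructor
      · linarith
      · intro hs; linarith
    · rcases le_or_gt m s with hms | hsm
      · -- s ≥ m : r ≥ m * B0 ≥ B0
        have hrge : B0 ≤ r := by
          have h1 : 0 ≤ (s - m) * B1 := mul_nonneg (by linarith) (by linarith)
          have h2 : B0 ≤ s * B0 := le_mul_of_one_le_left (by linarith) (by linarith)
          nlinarith
        have habs : B0 ≤ |r| := le_trans hrge (le_abs_self r)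
        have h3 : B2 ≤ 3 * B0 := by nlinarith
        have hmr : |r| ≤ m * |r| := le_mul_of_one_le_left (abs_nonneg r) hm
        have hsr : |r| ≤ s * |r| := le_mul_of_one_le_left (abs_nonneg r) (by linarith)
        have h01 : B0 ≤ B1 := by simp only [B0, B1]; exact_mod_cast fibb_le_succ p
        constructor
        · linarith
        · intro hs; linarith
      · -- 1 ≤ s < m : descend
        have hs : 1 ≤ s := hs1
        have hms' : 1 ≤ m - s := by linarith
        have hr' : (m - s) * B1 - s * B0 = -r := by rw [hrdef, hB]; ring
        have hrne : (m - s) * B1 - s * B0 ≠ 0 := by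
          rw [hr']; simpa using hr
        obtain ⟨h1, h2⟩ := ih (m - s) s hs hrne
        rw [hr', abs_neg] at h1 h2
        have h2' := h2 hms'
        constructor
        · have : B2 = B1 + B0 := hB
          nlinarith
        · intro _; linarith

lemma fibb_coprime (n : ℕ) : Nat.Coprime (fibb n) (fibb (n + 1)) := by
  induction n with
  | zero => simp [fibb, Nat.Coprime]
  | succ p ih =>
    have h : fibb (p + 2) = fibb (p + 1) + fibb p := rfl
    rw [h]
    simpa [Nat.Coprime, Nat.gcd_comm, Nat.gcd_add_self_left, Nat.add_comm] using ih

theorem stmt8 :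
    ∃ γ : ℝ, 0 < γ ∧ ∀ n : ℕ, 2 < n → ∀ k : ℤ × ℤ, k ≠ 0 →
      (fibb n : ℤ) ∣ (k.1 + (fibb (n - 1) : ℤ) * k.2) →
      ¬ (max |(k.1 : ℝ)| 1 * max |(k.2 : ℝ)| 1 ≤ γ * (fibb n : ℝ)) := by
  refine ⟨1/4, by norm_num, ?_⟩
  intro n hn k hk hdvd hle
  obtain ⟨p, rfl⟩ : ∃ p, n = p + 1 := ⟨n - 1, by omega⟩
  have hp1 : p + 1 - 1 = p := rfl
  rw [hp1] at hdvd
  have hB1pos : (1 : ℤ) ≤ (fibb (p + 1) : ℤ) := by exact_mod_cast fibb_pos (p + 1)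
  set B1 : ℤ := (fibb (p + 1) : ℤ)
  set B0 : ℤ := (fibb p : ℤ)
  have hB1posR : (0 : ℝ) < (fibb (p + 1) : ℝ) := by exact_mod_cast fibb_pos (p + 1)
  -- the product over ℝ is at least |k1| * |k2|, and ≥ |k1|, ≥ |k2|
  have hmax1 : (1:ℝ) ≤ max |(k.1 : ℝ)| 1 := le_max_right _ _
  have hmax2 : (1:ℝ) ≤ max |(k.2 : ℝ)| 1 := le_max_right _ _
  have hm1 : |(k.1 : ℝ)| ≤ max |(k.1 : ℝ)| 1 := le_max_left _ _
  have hm2 : |(k.2 : ℝ)| ≤ max |(k.2 : ℝ)| 1 := le_max_left _ _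
  obtain ⟨t, ht⟩ := hdvd
  -- main bound : fibb (p+1) ≤ 3 * max|k1| * max|k2| fails ⇒ contradiction
  have hkey : (fibb (p + 1) : ℝ) ≤ 3 * (max |(k.1 : ℝ)| 1 * max |(k.2 : ℝ)| 1) := by
    by_cases hk2 : k.2 = 0
    · -- then k.1 ≠ 0 and B1 ∣ k.1
      have hk1 : k.1 ≠ 0 := by
        intro h; apply hk; ext <;> simp [h, hk2]
      have hdd : B1 ∣ k.1 := ⟨t, by rw [← ht, hk2]; ring⟩
      have : B1 ≤ |k.1| := Int.le_of_dvd (abs_pos.mpr hk1) ((dvd_abs B1 k.1).mpr hdd)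
      have hR : (fibb (p+1) : ℝ) ≤ |(k.1 : ℝ)| := by
        rw [← Int.cast_abs]; exact_mod_cast this
      nlinarith
    · by_cases hk1 : k.1 = 0
      · -- B1 ∣ B0 * k.2, coprime ⇒ B1 ∣ k.2
        have hdd : B1 ∣ B0 * k.2 := ⟨t, by rw [← ht, hk1]; ring⟩
        have hcop : IsCoprime B1 B0 := by
          rw [Int.isCoprime_iff_gcd_eq_one]
          have h := Nat.Coprime.symm (fibb_coprime p)
          simp only [B1, B0, Int.gcd_natCast_natCast]
          exact h
        have hd2 : B1 ∣ k.2 := (hcop.dvd_of_dvd_mul_left) hdd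
        have : B1 ≤ |k.2| := Int.le_of_dvd (abs_pos.mpr hk2) ((dvd_abs B1 k.2).mpr hd2)
        have hR : (fibb (p+1) : ℝ) ≤ |(k.2 : ℝ)| := by
          rw [← Int.cast_abs]; exact_mod_cast this
        nlinarith
      · -- both nonzero
        have hint : B1 ≤ 3 * |k.2| * |k.1| := by
          rcases lt_or_ge 0 k.2 with hpos | hneg
          · have hrdef : t * B1 - k.2 * B0 = k.1 := by linarith [ht]
            have hrne : t * B1 - k.2 * B0 ≠ 0 := by rw [hrdef]; exact hk1
            have := (key p t k.2 hpos hrne).1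
            rw [hrdef] at this
            calc B1 ≤ 3 * k.2 * |k.1| := this
              _ ≤ 3 * |k.2| * |k.1| := by
                  have := le_abs_self k.2
                  nlinarith [abs_nonneg k.1]
          · have hpos' : 1 ≤ -k.2 := by
              rcases lt_or_eq_of_le hneg with h | h
              · omega
              · exact absurd h hk2
            have hrdef : (-t) * B1 - (-k.2) * B0 = -k.1 := by linear_combination ht
            have hrne : (-t) * B1 - (-k.2) * B0 ≠ 0 := by
              rw [hrdef]; simpa using hk1
            have := (key p (-t) (-k.2) hpos' hrne).1
            rw [hrdef, abs_neg] at this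
            calc B1 ≤ 3 * (-k.2) * |k.1| := this
              _ ≤ 3 * |k.2| * |k.1| := by
                  have := neg_le_abs k.2
                  nlinarith [abs_nonneg k.1]
        have hR : (fibb (p+1) : ℝ) ≤ 3 * |(k.2 : ℝ)| * |(k.1 : ℝ)| := by
          rw [← Int.cast_abs, ← Int.cast_abs]; exact_mod_cast hint
        have h1 : (0:ℝ) ≤ |(k.1 : ℝ)| := abs_nonneg _
        have h2 : (0:ℝ) ≤ |(k.2 : ℝ)| := abs_nonneg _
        nlinarith
  have : (fibb (p + 1) : ℝ) ≤ 3 * (1/4 * (fibb (p + 1) : ℝ)) := le_trans hkey (by nlinarith [mul_le_mul hle (le_refl (1:ℝ)) zero_le_one (by positivity : (0:ℝ) ≤ 1/4 * (fibb (p+1):ℝ))])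
  linarith
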